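/- arXiv:2003.08297 — 6 statements merged into one kernel-verified Lean document; each statement's English description precedes it below -/
import Mathlib

section
/- Let F be an invertible n×n complex matrix and ξ > 0. Define the 2n×2n block matrix H = [[F, ξ⁻²·I], [−I, −F*]]. Then det(H) · det(−ξ²·I_n) = det(F⁻¹* F⁻¹ − ξ² I) · det([[F, 0],[−I, −F*]]). Consequently, det(H) = 0 if and only if F⁻¹ has a singular value equal to ξ. -/
open Matrix

/-- `ξ` is a singular value of `A` iff `ξ²` is an eigenvalue of `Aᴴ A`. -/
def IsSingularValue {n : ℕ} (A : Matrix (Fin n) (Fin n) ℂ) (ξ : ℝ) : Prop :=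
  ∃ v : Fin n → ℂ, v ≠ 0 ∧ (Aᴴ * A) *ᵥ v = ((ξ : ℂ) ^ 2) • v

/-!
Eliminating the upper left block `F` of `H = [[F, c⁻¹ I], [−I, −Fᴴ]]` (with `c = ξ²`) gives
`det H = det F · det (c⁻¹ F⁻¹ − Fᴴ)`, and since `Fᴴ (F⁻¹)ᴴ = I`,
`−c (c⁻¹ F⁻¹ − Fᴴ) = −Fᴴ ((F⁻¹)ᴴ F⁻¹ − c I)`. Taking determinants yields the identity; the two
factors `det (−c I)` and `det [[F, 0], [−I, −Fᴴ]] = det F · det (−Fᴴ)` are nonzero, so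
`det H` vanishes exactly when `c` is an eigenvalue of `(F⁻¹)ᴴ F⁻¹`.
-/

namespace Matrix

variable {m : Type*} [Fintype m] [DecidableEq m]

theorem exists_mulVec_eq_smul_iff_det_sub_eq_zero {K : Type*} [Field K] (M : Matrix m m K)
    (c : K) : (∃ v ≠ 0, M *ᵥ v = c • v) ↔ (M - c • 1).det = 0 := by
  simp only [← exists_mulVec_eq_zero_iff, sub_mulVec, smul_mulVec, one_mulVec, sub_eq_zero]

section CommRing

variable {R : Type*} [CommRing R]

theorem det_fromBlocks_smul_one_neg_one (A D : Matrix m m R) (hA : IsUnit A.det) (s : R) :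
    (fromBlocks A (s • 1) (-1) D).det = A.det * (D + s • A⁻¹).det := by
  have : Invertible A := A.invertibleOfIsUnitDet hA
  rw [det_fromBlocks₁₁, invOf_eq_nonsing_inv, neg_mul, one_mul, Matrix.mul_smul, mul_one,
    smul_neg, sub_neg_eq_add]

theorem conjTranspose_mul_conjTranspose_inv_mul_inv_sub_smul [StarRing R] (F : Matrix m m R)
    (hF : IsUnit F.det) (c : R) :
    Fᴴ * ((F⁻¹)ᴴ * F⁻¹ - c • 1) = F⁻¹ - c • Fᴴ := by
  rw [mul_sub, ← mul_assoc, ← conjTranspose_mul, nonsing_inv_mul F hF, conjTranspose_one,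
    one_mul, Matrix.mul_smul, mul_one]

end CommRing

theorem det_fromBlocks_inv_smul_mul_det_neg_smul {K : Type*} [Field K] [StarRing K]
    (F : Matrix m m K) (hF : IsUnit F.det) {c : K} (hc : c ≠ 0) :
    (fromBlocks F (c⁻¹ • 1) (-1) (-Fᴴ)).det * ((-c) • (1 : Matrix m m K)).det =
      ((F⁻¹)ᴴ * F⁻¹ - c • 1).det * (fromBlocks F 0 (-1) (-Fᴴ)).det := by
  set M := (F⁻¹)ᴴ * F⁻¹ - c • 1
  have key : (-c) • (-Fᴴ + c⁻¹ • F⁻¹) = -Fᴴ * M := by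
    rw [neg_mul, conjTranspose_mul_conjTranspose_inv_mul_inv_sub_smul F hF, smul_add, smul_smul,
      neg_mul, mul_inv_cancel₀ hc]
    module
  calc (fromBlocks F (c⁻¹ • 1) (-1) (-Fᴴ)).det * ((-c) • (1 : Matrix m m K)).det
      = F.det * ((-Fᴴ + c⁻¹ • F⁻¹) * ((-c) • 1)).det := by
        rw [det_fromBlocks_smul_one_neg_one _ _ hF, det_mul, mul_assoc]
    _ = F.det * (-Fᴴ * M).det := by rw [Matrix.mul_smul, mul_one, ← key]
    _ = M.det * (fromBlocks F 0 (-1) (-Fᴴ)).det := by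
        rw [det_fromBlocks_zero₁₂, det_mul]
        ring

end Matrix

/-- The key determinant identity (eq. (vier)) for
`H = [[F, ξ⁻² I], [−I, −Fᴴ]]`, and the resulting singular value characterization. -/
theorem stmt_3 {n : ℕ} (F : Matrix (Fin n) (Fin n) ℂ) (hF : IsUnit F.det)
    (ξ : ℝ) (hξ : 0 < ξ)
    (H : Matrix (Fin n ⊕ Fin n) (Fin n ⊕ Fin n) ℂ)
    (hH : H = Matrix.fromBlocks F (((ξ : ℂ) ^ 2)⁻¹ • (1 : Matrix (Fin n) (Fin n) ℂ))
      (-(1 : Matrix (Fin n) (Fin n) ℂ)) (-(Fᴴ))) :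
    H.det * ((-((ξ : ℂ) ^ 2)) • (1 : Matrix (Fin n) (Fin n) ℂ)).det =
        ((F⁻¹)ᴴ * F⁻¹ - ((ξ : ℂ) ^ 2) • (1 : Matrix (Fin n) (Fin n) ℂ)).det *
          (Matrix.fromBlocks F (0 : Matrix (Fin n) (Fin n) ℂ)
            (-(1 : Matrix (Fin n) (Fin n) ℂ)) (-(Fᴴ))).det ∧
      (H.det = 0 ↔ IsSingularValue F⁻¹ ξ) := by
  have hc : (ξ : ℂ) ^ 2 ≠ 0 := pow_ne_zero 2 (Complex.ofReal_ne_zero.mpr hξ.ne')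
  have identity := hH ▸ det_fromBlocks_inv_smul_mul_det_neg_smul F hF hc
  have hscalar : ((-((ξ : ℂ) ^ 2)) • (1 : Matrix (Fin n) (Fin n) ℂ)).det ≠ 0 := by
    rw [det_smul, det_one, mul_one]
    exact pow_ne_zero _ (neg_ne_zero.mpr hc)
  have hblocks : (fromBlocks F 0 (-1) (-Fᴴ)).det ≠ 0 := by
    simp [det_fromBlocks_zero₁₂, det_neg, hF.ne_zero]
  refine ⟨identity, ?_⟩
  rw [IsSingularValue, exists_mulVec_eq_smul_iff_det_sub_eq_zero, ← mul_eq_zero_iff_right hscalar,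
    identity, mul_eq_zero_iff_right hblocks]
end

section
/- Let H be the 2n×2n matrix H = λI − M₀ − Σᵢ (Mᵢ e^{−λτᵢ} + M₋ᵢ e^{λτᵢ}) where M₀ = [[A₀, ξ⁻²I],[−I, −A₀*]], Mᵢ = [[Aᵢ, 0],[0, 0]], M₋ᵢ = [[0,0],[0, −Aᵢ*]]. If the vector (u, v) ∈ ℂ^{2n} satisfies H(iω)·(u,v) = 0 for real ω, then the row vector (−v*, u*) is a left null vector: (−v*, u*)·H(iω) = 0. -/
open Matrix Complex

/-- Hamiltonian-like symmetry: if `(u,v)` is a right null vector of `H(iω)`,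
then `(−v*, u*)` is a left null vector of `H(iω)`. -/
theorem stmt_4 {n m : ℕ} (A₀ : Matrix (Fin n) (Fin n) ℂ)
    (A : Fin m → Matrix (Fin n) (Fin n) ℂ) (τ : Fin m → ℝ) (hτ : ∀ i, 0 ≤ τ i)
    (ξ : ℝ) (hξ : 0 < ξ) (ω : ℝ)
    (M₀ : Matrix (Fin n ⊕ Fin n) (Fin n ⊕ Fin n) ℂ)
    (hM₀ : M₀ = Matrix.fromBlocks A₀ (((ξ : ℂ) ^ 2)⁻¹ • (1 : Matrix (Fin n) (Fin n) ℂ))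
      (-(1 : Matrix (Fin n) (Fin n) ℂ)) (-(A₀ᴴ)))
    (M : Fin m → Matrix (Fin n ⊕ Fin n) (Fin n ⊕ Fin n) ℂ)
    (hM : ∀ i, M i = Matrix.fromBlocks (A i) 0 0 0)
    (M' : Fin m → Matrix (Fin n ⊕ Fin n) (Fin n ⊕ Fin n) ℂ)
    (hM' : ∀ i, M' i = Matrix.fromBlocks 0 0 0 (-(A i)ᴴ))
    (H : Matrix (Fin n ⊕ Fin n) (Fin n ⊕ Fin n) ℂ)
    (hH : H = (Complex.I * ω) • (1 : Matrix (Fin n ⊕ Fin n) (Fin n ⊕ Fin n) ℂ) - M₀ -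
      ∑ i : Fin m, (Complex.exp (-(Complex.I * ω) * (τ i)) • M i +
        Complex.exp ((Complex.I * ω) * (τ i)) • M' i))
    (u v : Fin n → ℂ)
    (hnull : H *ᵥ (Sum.elim u v) = 0) :
    Matrix.vecMul (Sum.elim (fun j => -(starRingEnd ℂ) (v j))
      (fun j => (starRingEnd ℂ) (u j))) H = 0 := by
  set J : Matrix (Fin n ⊕ Fin n) (Fin n ⊕ Fin n) ℂ :=
    Matrix.fromBlocks 0 1 (-1) 0 with hJ
  have hJJ : J * J = -1 := by
    rw [hJ]
    rw [show (-1 : Matrix (Fin n ⊕ Fin n) (Fin n ⊕ Fin n) ℂ) =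
      Matrix.fromBlocks (-1) 0 0 (-1) from by
        rw [← Matrix.fromBlocks_one, Matrix.fromBlocks_neg]; simp]
    simp [Matrix.fromBlocks_multiply]
  have hM₀J : J * M₀ * J = M₀ᴴ := by
    rw [hM₀]
    simp [hJ, Matrix.fromBlocks_multiply, Matrix.fromBlocks_conjTranspose,
      Matrix.conjTranspose_smul, Complex.conj_ofReal]
  have hMJ : ∀ i, J * M i * J = (M' i)ᴴ := by
    intro i
    rw [hM i, hM' i]
    simp [hJ, Matrix.fromBlocks_multiply, Matrix.fromBlocks_conjTranspose]
  have hM'J : ∀ i, J * M' i * J = (M i)ᴴ := by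
    intro i
    rw [hM i, hM' i]
    simp [hJ, Matrix.fromBlocks_multiply, Matrix.fromBlocks_conjTranspose]
  have key : Hᴴ = J * H * J := by
    rw [hH]
    rw [Matrix.mul_sub, Matrix.mul_sub, Matrix.sub_mul, Matrix.sub_mul]
    rw [Matrix.conjTranspose_sub, Matrix.conjTranspose_sub]
    congr 1
    · congr 1
      · rw [Matrix.conjTranspose_smul, Matrix.conjTranspose_one]
        rw [Matrix.mul_smul, Matrix.smul_mul, Matrix.mul_one, hJJ, smul_neg]
        simp [Complex.conj_ofReal, neg_smul]
      · rw [← hM₀J]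
    · rw [Finset.mul_sum, Finset.sum_mul, Matrix.conjTranspose_sum]
      refine Finset.sum_congr rfl fun i _ => ?_
      rw [Matrix.conjTranspose_add, Matrix.conjTranspose_smul, Matrix.conjTranspose_smul]
      rw [Matrix.mul_add, Matrix.add_mul, Matrix.mul_smul, Matrix.mul_smul,
        Matrix.smul_mul, Matrix.smul_mul, hMJ i, hM'J i]
      rw [add_comm]
      congr 1
      · rw [Complex.star_def, ← Complex.exp_conj]
        congr 1
        simp [Complex.conj_ofReal]
      · rw [Complex.star_def, ← Complex.exp_conj]
        congr 1
        simp [Complex.conj_ofReal]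
  have hx : Hᴴ *ᵥ (Sum.elim (fun j => -(v j)) u) = 0 := by
    rw [key, Matrix.mul_assoc, ← Matrix.mulVec_mulVec, ← Matrix.mulVec_mulVec]
    have hJx : J *ᵥ (Sum.elim (fun j => -(v j)) u) = Sum.elim u v := by
      ext (j | j) <;>
        simp [hJ, Matrix.fromBlocks_mulVec, Matrix.neg_mulVec]
    rw [hJx, hnull]
    simp
  have h2 := congrArg star hx
  rw [Matrix.star_mulVec, Matrix.conjTranspose_conjTranspose, star_zero] at h2
  have hw : Sum.elim (fun j => -(starRingEnd ℂ) (v j)) (fun j => (starRingEnd ℂ) (u j)) =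
      star (Sum.elim (fun j => -(v j)) u) := by
    ext (j | j) <;> simp [Pi.star_apply, Complex.star_def]
  rw [hw]
  exact h2
end

section
/- With the notation above, the vector of values (p_N(θ₋N; λ), …, p_N(θ₋₁; λ))ᵀ equals (λ I − D₁₁)⁻¹ D₁₂, whenever λ I − D₁₁ is invertible. -/
open Matrix Polynomial

/-- `p` is the collocation polynomial `p_N(·; z)` on the mesh `θ`
(node `θ 0 = 0`, remaining nodes `θ i.succ`). -/
def IsColloc {N : ℕ} (θ : Fin (N + 1) → ℝ) (z : ℂ) (p : Polynomial ℂ) : Prop :=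
  p.degree ≤ (N : ℕ) ∧ p.eval 0 = 1 ∧
    ∀ i : Fin N, (Polynomial.derivative p).eval ((θ i.succ : ℝ) : ℂ) =
      z * p.eval ((θ i.succ : ℝ) : ℂ)

/-- The vector of values of the collocation polynomial at the interior mesh points
equals `(λ I − D₁₁)⁻¹ D₁₂` (eq. (lem3)). -/
theorem stmt_8 {N : ℕ} (θ : Fin (N + 1) → ℝ) (hθinj : Function.Injective θ)
    (hθ0 : θ 0 = 0)
    (D₁₁ : Matrix (Fin N) (Fin N) ℂ)
    (hD₁₁ : ∀ i k : Fin N, D₁₁ i k =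
      (Polynomial.derivative
        (Lagrange.basis Finset.univ (fun j => ((θ j : ℝ) : ℂ)) k.succ)).eval
          ((θ i.succ : ℝ) : ℂ))
    (D₁₂ : Fin N → ℂ)
    (hD₁₂ : ∀ i : Fin N, D₁₂ i =
      (Polynomial.derivative
        (Lagrange.basis Finset.univ (fun j => ((θ j : ℝ) : ℂ)) 0)).eval
          ((θ i.succ : ℝ) : ℂ))
    (z : ℂ) (hz : IsUnit (z • (1 : Matrix (Fin N) (Fin N) ℂ) - D₁₁).det)
    (p : Polynomial ℂ) (hp : IsColloc θ z p) :
    (fun i : Fin N => p.eval ((θ i.succ : ℝ) : ℂ)) =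
      (z • (1 : Matrix (Fin N) (Fin N) ℂ) - D₁₁)⁻¹ *ᵥ D₁₂ := by
  obtain ⟨hdeg, hp0, hcol⟩ := hp
  set v : Fin (N + 1) → ℂ := fun j => ((θ j : ℝ) : ℂ) with hv
  have hvinj : Set.InjOn v (Finset.univ : Finset (Fin (N + 1))) := by
    intro a _ b _ hab
    exact hθinj (by simpa [hv] using hab)
  have hdlt : p.degree < (Finset.univ : Finset (Fin (N + 1))).card := by
    rw [Finset.card_univ, Fintype.card_fin]
    exact lt_of_le_of_lt hdeg (by exact_mod_cast Nat.lt_succ_self N)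
  have hinterp := Lagrange.eq_interpolate hvinj hdlt
  set A := z • (1 : Matrix (Fin N) (Fin N) ℂ) - D₁₁ with hA
  set w : Fin N → ℂ := fun i => p.eval ((θ i.succ : ℝ) : ℂ) with hw
  have key : A *ᵥ w = D₁₂ := by
    funext i
    have hderiv : (Polynomial.derivative p).eval (v i.succ) =
        ∑ j : Fin (N + 1), p.eval (v j) *
          (Polynomial.derivative (Lagrange.basis Finset.univ v j)).eval (v i.succ) := by
      conv_lhs => rw [hinterp]
      rw [Lagrange.interpolate_apply]
      simp [Polynomial.eval_finset_sum]
    have h0 : p.eval (v 0) = 1 := by simp [hv, hθ0, hp0]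
    have hsplit : (Polynomial.derivative p).eval (v i.succ) =
        D₁₂ i + ∑ k : Fin N, w k * D₁₁ i k := by
      rw [hderiv, Fin.sum_univ_succ, h0, one_mul, hD₁₂ i]
      congr 1
      refine Finset.sum_congr rfl fun k _ => ?_
      rw [hD₁₁ i k]
    have hz' := hcol i
    have : z * w i = D₁₂ i + ∑ k : Fin N, w k * D₁₁ i k := by
      rw [← hsplit]; exact hz'.symm ▸ rfl
    simp only [hA, Matrix.mulVec, dotProduct, Matrix.sub_apply, Matrix.smul_apply,
      Matrix.one_apply, smul_eq_mul, sub_mul, mul_ite, mul_one, mul_zero, ite_mul, zero_mul,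
      Finset.sum_sub_distrib, Finset.sum_ite_eq, Finset.mem_univ, if_true]
    rw [show (∑ x : Fin N, D₁₁ i x * w x) = ∑ x : Fin N, w x * D₁₁ i x from
      Finset.sum_congr rfl fun k _ => mul_comm _ _]
    linear_combination this
  have := congrArg (fun u => A⁻¹ *ᵥ u) key
  simpa [Matrix.mulVec_mulVec, Matrix.nonsing_inv_mul A hz] using this
end

section
/- Let A_N be the (N+1)n × (N+1)n block matrix whose first N block rows are d_{i,k} I_n (i = −N,…,−1, k = −N,…,0) and whose last block row is (Γ₋N, …, Γ₀) with Γ₀ = A₀ + Σ_{l=1}^m A_l l_{N,0}(−τ_l) and Γ_k = Σ_{l=1}^m A_l l_{N,k}(−τ_l) for k < 0. Then det(λ I − A_N) = s(λ)ⁿ · det(λ I_n − A₀ − Σ_{l=1}^m A_l p_N(−τ_l; λ)), where s(λ) = det(λ I_N − D₁₁). -/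
/-!
Expanding `p_N(·; λ)` in the Lagrange basis of the mesh, the collocation conditions become
`(λ I - D₁₁) v = D₁₂` for the vector `v` of its values at the interior nodes, and
`p_N(-τₗ; λ) = l_{N,0}(-τₗ) + Σₖ vₖ l_{N,k}(-τₗ)`. The top-left block of `λ I - A_N` is
`(λ I - D₁₁) ⊗ Iₙ`, with determinant `s(λ)ⁿ`, and its Schur complement is
`λ I - Γ₀ - Σₖ vₖ Γₖ = λ I - A₀ - Σₗ p_N(-τₗ; λ) Aₗ`.
-/

open Matrix Polynomial

open scoped Kronecker

section Schur

variable {K ι κ : Type*} [Field K] [DecidableEq κ]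

theorem smul_one_sub_fromBlocks [DecidableEq ι] (D₁₁ : Matrix ι ι K) (D₁₂ : ι → K)
    (Γ : ι → Matrix κ κ K) (Γ₀ : Matrix κ κ K) (z : K) :
    z • (1 : Matrix (ι × κ ⊕ κ) (ι × κ ⊕ κ) K) -
        fromBlocks (fun (p q : ι × κ) => D₁₁ p.1 q.1 * if p.2 = q.2 then 1 else 0)
          (fun (p : ι × κ) (c : κ) => D₁₂ p.1 * if p.2 = c then 1 else 0)
          (fun (a : κ) (q : ι × κ) => Γ q.1 a q.2) Γ₀ =
      fromBlocks ((z • 1 - D₁₁) ⊗ₖ (1 : Matrix κ κ K))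
        (-of fun (q : ι × κ) (c : κ) => D₁₂ q.1 * if q.2 = c then 1 else 0)
        (-of fun (a : κ) (q : ι × κ) => Γ q.1 a q.2) (z • 1 - Γ₀) := by
  ext (⟨i, a⟩ | a) (⟨j, b⟩ | b) <;> simp [fromBlocks, one_apply, Prod.ext_iff, ite_and]
  split_ifs <;> simp

variable [Fintype ι] [Fintype κ]

theorem of_mul_kronecker_one_mul_of (M : Matrix ι ι K) (b : ι → K) (Γ : ι → Matrix κ κ K) :
    of (fun (a : κ) (q : ι × κ) => Γ q.1 a q.2) * (M ⊗ₖ (1 : Matrix κ κ K)) *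
        of (fun (q : ι × κ) (c : κ) => b q.1 * if q.2 = c then (1 : K) else 0) =
      ∑ k, (M *ᵥ b) k • Γ k := by
  ext a c
  simp only [mul_apply, kroneckerMap_apply, one_apply, of_apply, Fintype.sum_prod_type,
    Matrix.sum_apply, Matrix.smul_apply, smul_eq_mul, mulVec, dotProduct, mul_ite, mul_one,
    mul_zero, Finset.sum_ite_eq', Finset.mem_univ, if_true, Finset.sum_mul]
  rw [Finset.sum_comm]
  exact Finset.sum_congr rfl fun k _ => Finset.sum_congr rfl fun i _ => by ring

theorem det_fromBlocks_kronecker_one [DecidableEq ι] (S : Matrix ι ι K) (hS : IsUnit S.det)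
    (b : ι → K) (Γ : ι → Matrix κ κ K) (D : Matrix κ κ K) :
    (fromBlocks (S ⊗ₖ (1 : Matrix κ κ K))
        (-of fun (q : ι × κ) (c : κ) => b q.1 * if q.2 = c then 1 else 0)
        (-of fun (a : κ) (q : ι × κ) => Γ q.1 a q.2) D).det =
      S.det ^ Fintype.card κ * (D - ∑ k, (S⁻¹ *ᵥ b) k • Γ k).det := by
  have hinv : (S ⊗ₖ (1 : Matrix κ κ K)) * (S⁻¹ ⊗ₖ 1) = 1 := by
    rw [← mul_kronecker_mul, mul_nonsing_inv _ hS, Matrix.one_mul, one_kronecker_one]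
  let := invertibleOfRightInverse _ _ hinv
  rw [det_fromBlocks₁₁, invOf_eq_right_inv hinv, det_kronecker, det_one, one_pow, mul_one,
    Matrix.neg_mul, Matrix.neg_mul, Matrix.mul_neg, neg_neg, of_mul_kronecker_one_mul_of]

theorem det_smul_one_sub_fromBlocks [DecidableEq ι] (D₁₁ : Matrix ι ι K) (D₁₂ : ι → K)
    (Γ : ι → Matrix κ κ K) (Γ₀ : Matrix κ κ K) (z : K) (hz : (z • 1 - D₁₁).det ≠ 0) :
    (z • (1 : Matrix (ι × κ ⊕ κ) (ι × κ ⊕ κ) K) -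
        fromBlocks (fun (p q : ι × κ) => D₁₁ p.1 q.1 * if p.2 = q.2 then 1 else 0)
          (fun (p : ι × κ) (c : κ) => D₁₂ p.1 * if p.2 = c then 1 else 0)
          (fun (a : κ) (q : ι × κ) => Γ q.1 a q.2) Γ₀).det =
      (z • 1 - D₁₁).det ^ Fintype.card κ *
        (z • 1 - Γ₀ - ∑ k, ((z • 1 - D₁₁)⁻¹ *ᵥ D₁₂) k • Γ k).det := by
  rw [smul_one_sub_fromBlocks, det_fromBlocks_kronecker_one _ hz.isUnit]

end Schur

theorem Lagrange.apply_eq_sum_eval_mul_apply_basis {F ι : Type*} [Field F] [Fintype ι]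
    [DecidableEq ι] {x : ι → F} (hx : Function.Injective x) {p : F[X]}
    (hp : p.degree < Fintype.card ι) (f : F[X] →ₗ[F] F) :
    f p = ∑ j, p.eval (x j) * f (Lagrange.basis Finset.univ x j) := by
  conv_lhs => rw [Lagrange.eq_interpolate hx.injOn hp, Lagrange.interpolate_apply]
  simp [C_mul']

namespace IsColloc

variable {N : ℕ} {θ : Fin (N + 1) → ℝ} {z : ℂ} {p : ℂ[X]}

theorem apply_eq_lagrange (hθ : Function.Injective θ) (hθ0 : θ 0 = 0) (hp : IsColloc θ z p)
    (f : ℂ[X] →ₗ[ℂ] ℂ) :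
    f p = f (Lagrange.basis Finset.univ (fun j => ((θ j : ℝ) : ℂ)) 0) +
      ∑ k : Fin N, p.eval ((θ k.succ : ℝ) : ℂ) *
        f (Lagrange.basis Finset.univ (fun j => ((θ j : ℝ) : ℂ)) k.succ) := by
  have hdeg : p.degree < Fintype.card (Fin (N + 1)) :=
    hp.1.trans_lt (by rw [Fintype.card_fin]; exact_mod_cast N.lt_succ_self)
  rw [Lagrange.apply_eq_sum_eval_mul_apply_basis (x := fun j => ((θ j : ℝ) : ℂ))
    (fun _ _ h => hθ (Complex.ofReal_injective h)) hdeg, Fin.sum_univ_succ]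
  simp [hθ0, hp.2.1]

theorem eval_eq_lagrange (hθ : Function.Injective θ) (hθ0 : θ 0 = 0) (hp : IsColloc θ z p) (w : ℂ) :
    p.eval w = (Lagrange.basis Finset.univ (fun j => ((θ j : ℝ) : ℂ)) 0).eval w +
      ∑ k : Fin N, p.eval ((θ k.succ : ℝ) : ℂ) *
        (Lagrange.basis Finset.univ (fun j => ((θ j : ℝ) : ℂ)) k.succ).eval w :=
  hp.apply_eq_lagrange hθ hθ0 (leval w)

theorem smul_one_sub_mulVec_eq (hθ : Function.Injective θ) (hθ0 : θ 0 = 0) (hp : IsColloc θ z p)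
    (D₁₁ : Matrix (Fin N) (Fin N) ℂ)
    (hD₁₁ : ∀ i k : Fin N, D₁₁ i k =
      (derivative (Lagrange.basis Finset.univ (fun j => ((θ j : ℝ) : ℂ)) k.succ)).eval
        ((θ i.succ : ℝ) : ℂ))
    (D₁₂ : Fin N → ℂ)
    (hD₁₂ : ∀ i : Fin N, D₁₂ i =
      (derivative (Lagrange.basis Finset.univ (fun j => ((θ j : ℝ) : ℂ)) 0)).eval
        ((θ i.succ : ℝ) : ℂ)) :
    (z • 1 - D₁₁) *ᵥ (fun k => p.eval ((θ k.succ : ℝ) : ℂ)) = D₁₂ := by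
  ext i
  have hderiv := hp.apply_eq_lagrange hθ hθ0 ((leval ((θ i.succ : ℝ) : ℂ)).comp derivative)
  simp only [LinearMap.comp_apply, leval_apply, ← hD₁₁, ← hD₁₂, hp.2.2 i] at hderiv
  rw [sub_mulVec, smul_mulVec, one_mulVec]
  simp only [Pi.sub_apply, Pi.smul_apply, smul_eq_mul, mulVec, dotProduct,
    mul_comm (D₁₁ i _)]
  linear_combination hderiv

end IsColloc

theorem stmt_9_general {N n m : ℕ} (θ : Fin (N + 1) → ℝ) (hθinj : Function.Injective θ)
    (hθ0 : θ 0 = 0)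
    (A₀ : Matrix (Fin n) (Fin n) ℂ) (A : Fin m → Matrix (Fin n) (Fin n) ℂ)
    (τ : Fin m → ℝ)
    (D₁₁ : Matrix (Fin N) (Fin N) ℂ)
    (hD₁₁ : ∀ i k : Fin N, D₁₁ i k =
      (Polynomial.derivative
        (Lagrange.basis Finset.univ (fun j => ((θ j : ℝ) : ℂ)) k.succ)).eval
          ((θ i.succ : ℝ) : ℂ))
    (D₁₂ : Fin N → ℂ)
    (hD₁₂ : ∀ i : Fin N, D₁₂ i =
      (Polynomial.derivative
        (Lagrange.basis Finset.univ (fun j => ((θ j : ℝ) : ℂ)) 0)).eval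
          ((θ i.succ : ℝ) : ℂ))
    -- the blocks `Γₖ` (interior nodes) and `Γ₀`
    (Γ : Fin N → Matrix (Fin n) (Fin n) ℂ)
    (hΓ : ∀ k : Fin N, Γ k = ∑ l : Fin m,
      ((Lagrange.basis Finset.univ (fun j => ((θ j : ℝ) : ℂ)) k.succ).eval
        ((-(τ l) : ℝ) : ℂ)) • A l)
    (Γ₀ : Matrix (Fin n) (Fin n) ℂ)
    (hΓ₀ : Γ₀ = A₀ + ∑ l : Fin m,
      ((Lagrange.basis Finset.univ (fun j => ((θ j : ℝ) : ℂ)) 0).eval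
        ((-(τ l) : ℝ) : ℂ)) • A l)
    -- the discretization matrix `A_N`
    (AN : Matrix ((Fin N × Fin n) ⊕ Fin n) ((Fin N × Fin n) ⊕ Fin n) ℂ)
    (hAN : AN = Matrix.fromBlocks
      (fun p q => D₁₁ p.1 q.1 * (if p.2 = q.2 then (1 : ℂ) else 0))
      (fun p b => D₁₂ p.1 * (if p.2 = b then (1 : ℂ) else 0))
      (fun a q => Γ q.1 a q.2)
      Γ₀)
    (z : ℂ)
    (hz : (z • (1 : Matrix (Fin N) (Fin N) ℂ) - D₁₁).det ≠ 0)
    (p : Polynomial ℂ) (hp : IsColloc θ z p) :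
    (z • (1 : Matrix ((Fin N × Fin n) ⊕ Fin n) ((Fin N × Fin n) ⊕ Fin n) ℂ) - AN).det =
      ((z • (1 : Matrix (Fin N) (Fin N) ℂ) - D₁₁).det) ^ n *
        (z • (1 : Matrix (Fin n) (Fin n) ℂ) - A₀ -
          ∑ l : Fin m, (p.eval ((-(τ l) : ℝ) : ℂ)) • A l).det := by
  have hv : (z • 1 - D₁₁)⁻¹ *ᵥ D₁₂ = fun k => p.eval ((θ k.succ : ℝ) : ℂ) := by
    rw [← hp.smul_one_sub_mulVec_eq hθinj hθ0 D₁₁ hD₁₁ D₁₂ hD₁₂, mulVec_mulVec,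
      nonsing_inv_mul _ hz.isUnit, one_mulVec]
  have hschur : Γ₀ + ∑ k, p.eval ((θ k.succ : ℝ) : ℂ) • Γ k =
      A₀ + ∑ l, p.eval ((-(τ l) : ℝ) : ℂ) • A l := by
    simp_rw [hΓ, Finset.smul_sum, smul_smul]
    rw [Finset.sum_comm, hΓ₀, add_assoc, ← Finset.sum_add_distrib]
    congr 1
    refine Finset.sum_congr rfl fun l _ => ?_
    rw [← Finset.sum_smul, ← add_smul, hp.eval_eq_lagrange hθinj hθ0]
  rw [hAN, det_smul_one_sub_fromBlocks _ _ _ _ _ hz, hv, Fintype.card_fin, sub_sub, sub_sub,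
    hschur]

/-- Equation (approx1): `det(λ I − A_N) = s(λ)ⁿ · det(λ Iₙ − A₀ − Σₗ Aₗ p_N(−τₗ; λ))`,
where `s(λ) = det(λ I_N − D₁₁)` and `A_N` is the spectral discretization matrix. -/
theorem stmt_9 {N n m : ℕ} (θ : Fin (N + 1) → ℝ) (hθinj : Function.Injective θ)
    (hθ0 : θ 0 = 0)
    (A₀ : Matrix (Fin n) (Fin n) ℂ) (A : Fin m → Matrix (Fin n) (Fin n) ℂ)
    (τ : Fin m → ℝ) (hτ : ∀ l, 0 ≤ τ l)
    (D₁₁ : Matrix (Fin N) (Fin N) ℂ)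
    (hD₁₁ : ∀ i k : Fin N, D₁₁ i k =
      (Polynomial.derivative
        (Lagrange.basis Finset.univ (fun j => ((θ j : ℝ) : ℂ)) k.succ)).eval
          ((θ i.succ : ℝ) : ℂ))
    (D₁₂ : Fin N → ℂ)
    (hD₁₂ : ∀ i : Fin N, D₁₂ i =
      (Polynomial.derivative
        (Lagrange.basis Finset.univ (fun j => ((θ j : ℝ) : ℂ)) 0)).eval
          ((θ i.succ : ℝ) : ℂ))
    -- the blocks `Γₖ` (interior nodes) and `Γ₀`
    (Γ : Fin N → Matrix (Fin n) (Fin n) ℂ)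
    (hΓ : ∀ k : Fin N, Γ k = ∑ l : Fin m,
      ((Lagrange.basis Finset.univ (fun j => ((θ j : ℝ) : ℂ)) k.succ).eval
        ((-(τ l) : ℝ) : ℂ)) • A l)
    (Γ₀ : Matrix (Fin n) (Fin n) ℂ)
    (hΓ₀ : Γ₀ = A₀ + ∑ l : Fin m,
      ((Lagrange.basis Finset.univ (fun j => ((θ j : ℝ) : ℂ)) 0).eval
        ((-(τ l) : ℝ) : ℂ)) • A l)
    -- the discretization matrix `A_N`
    (AN : Matrix ((Fin N × Fin n) ⊕ Fin n) ((Fin N × Fin n) ⊕ Fin n) ℂ)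
    (hAN : AN = Matrix.fromBlocks
      (fun p q => D₁₁ p.1 q.1 * (if p.2 = q.2 then (1 : ℂ) else 0))
      (fun p b => D₁₂ p.1 * (if p.2 = b then (1 : ℂ) else 0))
      (fun a q => Γ q.1 a q.2)
      Γ₀)
    (z : ℂ)
    (hz : (z • (1 : Matrix (Fin N) (Fin N) ℂ) - D₁₁).det ≠ 0)
    (p : Polynomial ℂ) (hp : IsColloc θ z p) :
    (z • (1 : Matrix ((Fin N × Fin n) ⊕ Fin n) ((Fin N × Fin n) ⊕ Fin n) ℂ) - AN).det =
      ((z • (1 : Matrix (Fin N) (Fin N) ℂ) - D₁₁).det) ^ n *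
        (z • (1 : Matrix (Fin n) (Fin n) ℂ) - A₀ -
          ∑ l : Fin m, (p.eval ((-(τ l) : ℝ) : ℂ)) • A l).det :=
  stmt_9_general θ hθinj hθ0 A₀ A τ D₁₁ hD₁₁ D₁₂ hD₁₂ Γ hΓ Γ₀ hΓ₀ AN hAN z hz p hp
end

section
/- Theorem (transfer function of the spectral discretization): with A_N as above and B_N = (0_n, …, 0_n, I_n)* the (N+1)n × n matrix selecting the last block, for all λ such that λI − A_N and λ I_n − A₀ − Σ_{i=1}^m A_i p_N(−τᵢ; λ) are invertible, B_N* (λ I_{(N+1)n} − A_N)⁻¹ B_N = (λ I_n − A₀ − Σ_{i=1}^m A_i p_N(−τᵢ; λ))⁻¹. -/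
open Matrix Polynomial

/-!
Write `λI − A_N` in block form `[[P, Q], [C, T]]`, splitting off the node `θ₀ = 0`. The values
`c_k = p_N(θ_k; λ)` at the interior nodes give the block column `Y = (c_k Iₙ)_k`, and
`P Y + Q = 0` is exactly the collocation condition `p_N' = λ p_N` at the interior nodes, written
with the differentiation matrix. Interpolating `p_N` at the nodes (with `p_N(0) = 1`) gives
`C Y + T = S := λIₙ − A₀ − Σᵢ Aᵢ p_N(−τᵢ; λ)`. Hence `λI − A_N` maps `(Y S⁻¹; S⁻¹)` to
`(0; Iₙ) = B_N`, so `(λI − A_N)⁻¹ B_N = (Y S⁻¹; S⁻¹)`, whose last block is `S⁻¹`.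
-/

open scoped Kronecker
open Finset

namespace Matrix

variable {ι κ R : Type*} [CommRing R]

theorem inv_fromBlocks_mul_fromRows_zero_one [Fintype ι] [Fintype κ] [DecidableEq ι]
    [DecidableEq κ] (P : Matrix ι ι R) (Q : Matrix ι κ R) (C : Matrix κ ι R) (T : Matrix κ κ R)
    (Y : Matrix ι κ R) (hY : P * Y + Q = 0) (hM : IsUnit (fromBlocks P Q C T).det)
    (hS : IsUnit (C * Y + T).det) :
    (fromBlocks P Q C T)⁻¹ * fromRows (0 : Matrix ι κ R) (1 : Matrix κ κ R) =
      fromRows (Y * (C * Y + T)⁻¹) (C * Y + T)⁻¹ := by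
  have hcol : fromBlocks P Q C T *
      (fromRows (Y * (C * Y + T)⁻¹) (C * Y + T)⁻¹ : Matrix (ι ⊕ κ) κ R) =
      fromRows (0 : Matrix ι κ R) (1 : Matrix κ κ R) := by
    rw [fromBlocks_mul_fromRows, ← Matrix.mul_assoc, ← Matrix.mul_assoc, ← Matrix.add_mul,
      ← Matrix.add_mul, hY, Matrix.zero_mul, mul_nonsing_inv _ hS]
  rw [← hcol]
  exact nonsing_inv_mul_cancel_left (A := fromBlocks P Q C T) _ hM

theorem conjTranspose_fromRows_zero_one_mul_fromRows [Fintype ι] [Fintype κ] [DecidableEq κ]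
    [StarRing R] (X₁ : Matrix ι κ R) (X₂ : Matrix κ κ R) :
    (fromRows (0 : Matrix ι κ R) (1 : Matrix κ κ R))ᴴ * fromRows X₁ X₂ = X₂ := by
  rw [conjTranspose_fromRows_eq_fromCols_conjTranspose, fromCols_mul_fromRows]
  simp

theorem smul_one_sub_fromBlocks [DecidableEq ι] [DecidableEq κ] (z : R) (P : Matrix ι ι R)
    (Q : Matrix ι κ R) (C : Matrix κ ι R) (T : Matrix κ κ R) :
    z • 1 - fromBlocks P Q C T = fromBlocks (z • 1 - P) (-Q) (-C) (z • 1 - T) := by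
  ext (_ | _) (_ | _) <;> simp [one_apply]

variable (κ) in
def scalarBlockCol [DecidableEq κ] (c : ι → R) : Matrix (ι × κ) κ R :=
  of fun q j => c q.1 * if q.2 = j then 1 else 0

def blockRow (Γ : ι → Matrix κ κ R) : Matrix κ (ι × κ) R :=
  of fun a q => Γ q.1 a q.2

section scalarBlockCol

variable [DecidableEq κ]

theorem scalarBlockCol_add (c d : ι → R) :
    scalarBlockCol κ (c + d) = scalarBlockCol κ c + scalarBlockCol κ d := by
  ext; simp only [scalarBlockCol, of_apply, add_apply, Pi.add_apply, add_mul]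

theorem scalarBlockCol_smul (z : R) (c : ι → R) :
    scalarBlockCol κ (z • c) = z • scalarBlockCol κ c := by
  ext; simp only [scalarBlockCol, of_apply, smul_apply, Pi.smul_apply, smul_eq_mul, mul_assoc]

variable [Fintype ι] [Fintype κ]

theorem kronecker_one_mul_scalarBlockCol (D : Matrix ι ι R) (c : ι → R) :
    D ⊗ₖ (1 : Matrix κ κ R) * scalarBlockCol κ c = scalarBlockCol κ (D *ᵥ c) := by
  ext ⟨i, a⟩ j
  simp [scalarBlockCol, mul_apply, Fintype.sum_prod_type, one_apply, mulVec, dotProduct]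

theorem smul_one_sub_kronecker_one_mul_scalarBlockCol_add_neg [DecidableEq ι] (z : R)
    (D : Matrix ι ι R) (c d : ι → R) (h : D *ᵥ c + d = z • c) :
    (z • 1 - D ⊗ₖ (1 : Matrix κ κ R)) * scalarBlockCol κ c + -scalarBlockCol κ d = 0 := by
  rw [Matrix.sub_mul, Matrix.smul_mul, Matrix.one_mul, kronecker_one_mul_scalarBlockCol,
    ← scalarBlockCol_smul, ← h, scalarBlockCol_add]
  abel

theorem blockRow_mul_scalarBlockCol (Γ : ι → Matrix κ κ R) (c : ι → R) :
    blockRow Γ * scalarBlockCol κ c = ∑ k, c k • Γ k := by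
  ext a j
  simp [blockRow, scalarBlockCol, mul_apply, Fintype.sum_prod_type, sum_apply, mul_comm]

end scalarBlockCol

end Matrix

namespace Lagrange

variable {F : Type*} [Field F] {N : ℕ} {v : Fin (N + 1) → F} {p : F[X]}

theorem eq_basis_zero_add_sum_of_eval_eq_one (hv : Function.Injective v)
    (hdeg : p.degree ≤ N) (h0 : p.eval (v 0) = 1) :
    p = Lagrange.basis univ v 0 +
      ∑ k : Fin N, C (p.eval (v k.succ)) * Lagrange.basis univ v k.succ := by
  have hcard : p.degree < #(univ : Finset (Fin (N + 1))) := by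
    rw [card_univ, Fintype.card_fin]
    exact hdeg.trans_lt (by exact_mod_cast N.lt_succ_self)
  conv_lhs => rw [eq_interpolate hv.injOn hcard, interpolate_apply, Fin.sum_univ_succ, h0, C_1,
    one_mul]

theorem differentiationMatrix_mulVec_add_eq (hv : Function.Injective v) (hdeg : p.degree ≤ N)
    (h0 : p.eval (v 0) = 1) :
    (of fun i k : Fin N => (derivative (Lagrange.basis univ v k.succ)).eval (v i.succ)) *ᵥ
        (fun k => p.eval (v k.succ)) +
      (fun i => (derivative (Lagrange.basis univ v 0)).eval (v i.succ)) =
      fun i => (derivative p).eval (v i.succ) := by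
  ext i
  have h := congrArg (fun q => (derivative q).eval (v i.succ))
    (eq_basis_zero_add_sum_of_eval_eq_one hv hdeg h0)
  simp only [derivative_add, derivative_sum, derivative_C_mul, eval_add, eval_finsetSum,
    eval_C_mul] at h
  simp only [Pi.add_apply, mulVec, dotProduct, of_apply, h]
  simp only [mul_comm, add_comm]

theorem sum_eval_smul_eq {ι M : Type*} [Fintype ι] [AddCommGroup M] [Module F M]
    (hv : Function.Injective v) (hdeg : p.degree ≤ N) (h0 : p.eval (v 0) = 1)
    (x : ι → F) (A : ι → M) :
    ∑ l, p.eval (x l) • A l = ∑ l, (Lagrange.basis univ v 0).eval (x l) • A l +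
      ∑ k : Fin N, p.eval (v k.succ) • ∑ l, (Lagrange.basis univ v k.succ).eval (x l) • A l := by
  conv_lhs => rw [eq_basis_zero_add_sum_of_eval_eq_one hv hdeg h0]
  simp only [eval_add, eval_finsetSum, eval_C_mul, add_smul, sum_add_distrib, sum_smul,
    smul_sum, smul_smul]
  rw [sum_comm]

end Lagrange

theorem stmt_10_general {N n m : ℕ} (θ : Fin (N + 1) → ℝ) (hθinj : Function.Injective θ)
    (hθ0 : θ 0 = 0)
    (A₀ : Matrix (Fin n) (Fin n) ℂ) (A : Fin m → Matrix (Fin n) (Fin n) ℂ)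
    (τ : Fin m → ℝ)
    (D₁₁ : Matrix (Fin N) (Fin N) ℂ)
    (hD₁₁ : ∀ i k : Fin N, D₁₁ i k =
      (Polynomial.derivative
        (Lagrange.basis Finset.univ (fun j => ((θ j : ℝ) : ℂ)) k.succ)).eval
          ((θ i.succ : ℝ) : ℂ))
    (D₁₂ : Fin N → ℂ)
    (hD₁₂ : ∀ i : Fin N, D₁₂ i =
      (Polynomial.derivative
        (Lagrange.basis Finset.univ (fun j => ((θ j : ℝ) : ℂ)) 0)).eval
          ((θ i.succ : ℝ) : ℂ))
    -- the blocks `Γₖ` (interior nodes) and `Γ₀`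
    (Γ : Fin N → Matrix (Fin n) (Fin n) ℂ)
    (hΓ : ∀ k : Fin N, Γ k = ∑ l : Fin m,
      ((Lagrange.basis Finset.univ (fun j => ((θ j : ℝ) : ℂ)) k.succ).eval
        ((-(τ l) : ℝ) : ℂ)) • A l)
    (Γ₀ : Matrix (Fin n) (Fin n) ℂ)
    (hΓ₀ : Γ₀ = A₀ + ∑ l : Fin m,
      ((Lagrange.basis Finset.univ (fun j => ((θ j : ℝ) : ℂ)) 0).eval
        ((-(τ l) : ℝ) : ℂ)) • A l)
    -- the discretization matrix `A_N`
    (AN : Matrix ((Fin N × Fin n) ⊕ Fin n) ((Fin N × Fin n) ⊕ Fin n) ℂ)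
    (hAN : AN = Matrix.fromBlocks
      (fun p q => D₁₁ p.1 q.1 * (if p.2 = q.2 then (1 : ℂ) else 0))
      (fun p b => D₁₂ p.1 * (if p.2 = b then (1 : ℂ) else 0))
      (fun a q => Γ q.1 a q.2)
      Γ₀)
    -- `B_N` selects the last block of `n` coordinates
    (B : Matrix ((Fin N × Fin n) ⊕ Fin n) (Fin n) ℂ)
    (hB : B = Matrix.of (fun q j => Sum.elim (fun _ => (0 : ℂ))
      (fun a => if a = j then (1 : ℂ) else 0) q))
    (z : ℂ)
    (p : Polynomial ℂ) (hp : IsColloc θ z p)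
    (hinv1 : IsUnit (z • (1 : Matrix ((Fin N × Fin n) ⊕ Fin n) ((Fin N × Fin n) ⊕ Fin n) ℂ)
      - AN).det)
    (hinv2 : IsUnit (z • (1 : Matrix (Fin n) (Fin n) ℂ) - A₀ -
      ∑ i : Fin m, (p.eval ((-(τ i) : ℝ) : ℂ)) • A i).det) :
    Bᴴ * (z • (1 : Matrix ((Fin N × Fin n) ⊕ Fin n) ((Fin N × Fin n) ⊕ Fin n) ℂ) - AN)⁻¹ * B =
      (z • (1 : Matrix (Fin n) (Fin n) ℂ) - A₀ -
        ∑ i : Fin m, (p.eval ((-(τ i) : ℝ) : ℂ)) • A i)⁻¹ := by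
  obtain ⟨hdeg, hp0, hcol⟩ := hp
  set v : Fin (N + 1) → ℂ := fun j => ((θ j : ℝ) : ℂ)
  have hv : Function.Injective v := fun a b h => hθinj (Complex.ofReal_injective h)
  have hv0 : p.eval (v 0) = 1 := by simpa [v, hθ0] using hp0
  set c : Fin N → ℂ := fun k => p.eval (v k.succ)
  have hcolloc : D₁₁ *ᵥ c + D₁₂ = z • c := by
    have hD₁₁' : D₁₁ =
        of fun i k => (derivative (Lagrange.basis univ v k.succ)).eval (v i.succ) := ext hD₁₁
    rw [hD₁₁', funext hD₁₂, Lagrange.differentiationMatrix_mulVec_add_eq hv hdeg hv0]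
    exact funext hcol
  have hschur : -blockRow Γ * scalarBlockCol (Fin n) c + (z • 1 - Γ₀) =
      z • 1 - A₀ - ∑ i : Fin m, (p.eval ((-(τ i) : ℝ) : ℂ)) • A i := by
    rw [Lagrange.sum_eval_smul_eq hv hdeg hv0, Matrix.neg_mul, blockRow_mul_scalarBlockCol, hΓ₀]
    simp only [hΓ, c]
    abel
  have hAN' : z • 1 - AN = fromBlocks (z • 1 - D₁₁ ⊗ₖ (1 : Matrix (Fin n) (Fin n) ℂ))
      (-scalarBlockCol (Fin n) D₁₂) (-blockRow Γ) (z • 1 - Γ₀) := by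
    rw [hAN]
    exact smul_one_sub_fromBlocks z _ _ _ _
  have hB' : B = fromRows (0 : Matrix (Fin N × Fin n) (Fin n) ℂ) 1 := by
    rw [hB]; ext (_ | _) j <;> simp [one_apply]
  rw [hB', hAN', Matrix.mul_assoc, inv_fromBlocks_mul_fromRows_zero_one _ _ _ _ _
      (smul_one_sub_kronecker_one_mul_scalarBlockCol_add_neg z D₁₁ c D₁₂ hcolloc)
      (hAN' ▸ hinv1) (hschur ▸ hinv2),
    conjTranspose_fromRows_zero_one_mul_fromRows, hschur]

/-- Theorem 1 (transfer function of the spectral discretization):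
`B_N* (λ I − A_N)⁻¹ B_N = (λ Iₙ − A₀ − Σᵢ Aᵢ p_N(−τᵢ; λ))⁻¹`
whenever both matrices are invertible, with `B_N` the selector of the last block. -/
theorem stmt_10 {N n m : ℕ} (θ : Fin (N + 1) → ℝ) (hθinj : Function.Injective θ)
    (hθ0 : θ 0 = 0)
    (A₀ : Matrix (Fin n) (Fin n) ℂ) (A : Fin m → Matrix (Fin n) (Fin n) ℂ)
    (τ : Fin m → ℝ) (hτ : ∀ l, 0 ≤ τ l)
    (D₁₁ : Matrix (Fin N) (Fin N) ℂ)
    (hD₁₁ : ∀ i k : Fin N, D₁₁ i k =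
      (Polynomial.derivative
        (Lagrange.basis Finset.univ (fun j => ((θ j : ℝ) : ℂ)) k.succ)).eval
          ((θ i.succ : ℝ) : ℂ))
    (D₁₂ : Fin N → ℂ)
    (hD₁₂ : ∀ i : Fin N, D₁₂ i =
      (Polynomial.derivative
        (Lagrange.basis Finset.univ (fun j => ((θ j : ℝ) : ℂ)) 0)).eval
          ((θ i.succ : ℝ) : ℂ))
    -- the blocks `Γₖ` (interior nodes) and `Γ₀`
    (Γ : Fin N → Matrix (Fin n) (Fin n) ℂ)
    (hΓ : ∀ k : Fin N, Γ k = ∑ l : Fin m,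
      ((Lagrange.basis Finset.univ (fun j => ((θ j : ℝ) : ℂ)) k.succ).eval
        ((-(τ l) : ℝ) : ℂ)) • A l)
    (Γ₀ : Matrix (Fin n) (Fin n) ℂ)
    (hΓ₀ : Γ₀ = A₀ + ∑ l : Fin m,
      ((Lagrange.basis Finset.univ (fun j => ((θ j : ℝ) : ℂ)) 0).eval
        ((-(τ l) : ℝ) : ℂ)) • A l)
    -- the discretization matrix `A_N`
    (AN : Matrix ((Fin N × Fin n) ⊕ Fin n) ((Fin N × Fin n) ⊕ Fin n) ℂ)
    (hAN : AN = Matrix.fromBlocks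
      (fun p q => D₁₁ p.1 q.1 * (if p.2 = q.2 then (1 : ℂ) else 0))
      (fun p b => D₁₂ p.1 * (if p.2 = b then (1 : ℂ) else 0))
      (fun a q => Γ q.1 a q.2)
      Γ₀)
    -- `B_N` selects the last block of `n` coordinates
    (B : Matrix ((Fin N × Fin n) ⊕ Fin n) (Fin n) ℂ)
    (hB : B = Matrix.of (fun q j => Sum.elim (fun _ => (0 : ℂ))
      (fun a => if a = j then (1 : ℂ) else 0) q))
    (z : ℂ)
    (p : Polynomial ℂ) (hp : IsColloc θ z p)
    (hinv1 : IsUnit (z • (1 : Matrix ((Fin N × Fin n) ⊕ Fin n) ((Fin N × Fin n) ⊕ Fin n) ℂ)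
      - AN).det)
    (hinv2 : IsUnit (z • (1 : Matrix (Fin n) (Fin n) ℂ) - A₀ -
      ∑ i : Fin m, (p.eval ((-(τ i) : ℝ) : ℂ)) • A i).det) :
    Bᴴ * (z • (1 : Matrix ((Fin N × Fin n) ⊕ Fin n) ((Fin N × Fin n) ⊕ Fin n) ℂ) - AN)⁻¹ * B =
      (z • (1 : Matrix (Fin n) (Fin n) ℂ) - A₀ -
        ∑ i : Fin m, (p.eval ((-(τ i) : ℝ) : ℂ)) • A i)⁻¹ :=
  stmt_10_general θ hθinj hθ0 A₀ A τ D₁₁ hD₁₁ D₁₂ hD₁₂ Γ hΓ Γ₀ hΓ₀ AN hAN B hB z p hp hinv1 hinv2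
end

section
/- Let M be an invertible square matrix partitioned as M = [[P, Q],[R, S]] with P square and invertible. Then for index pairs (k,l) ranging over the block S, the (k,l) entry of the adjugate of M restricted to the S-block, i.e. the (k,l) entry of E* adj(M) E where E selects the S-block columns, equals det(P) times the corresponding entry of the adjugate of the Schur complement S − R P⁻¹ Q: {E* adj(M) E}_{k,l} = det(P) · {adj(S − R P⁻¹ Q)}_{k,l}. -/
open Matrix

private lemma adj_eq_det_smul_inv {n : Type*} [Fintype n] [DecidableEq n] (A : Matrix n n ℂ) (h : IsUnit A.det) :
    A.adjugate = A.det • A⁻¹ := by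
  rw [Matrix.inv_def, smul_smul, Ring.mul_inverse_cancel _ h, one_smul]


/-- Adjugate of a block matrix restricted to the lower-right block:
`{E* adj(M) E}_{k,l} = det(P) · {adj(S − R P⁻¹ Q)}_{k,l}`, for
`M = [[P, Q],[R, S]]` with `P` invertible and `M` invertible. -/
theorem stmt_11 {p q : ℕ} (P : Matrix (Fin p) (Fin p) ℂ) (Q : Matrix (Fin p) (Fin q) ℂ)
    (R : Matrix (Fin q) (Fin p) ℂ) (S : Matrix (Fin q) (Fin q) ℂ)
    (hP : IsUnit P.det) (hM : IsUnit (Matrix.fromBlocks P Q R S).det) :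
    ∀ k l : Fin q,
      (Matrix.fromBlocks P Q R S).adjugate (Sum.inr k) (Sum.inr l) =
        P.det * (S - R * P⁻¹ * Q).adjugate k l := by
  intro k l
  letI : Invertible P := P.invertibleOfIsUnitDet hP
  letI : Invertible (Matrix.fromBlocks P Q R S) := (Matrix.fromBlocks P Q R S).invertibleOfIsUnitDet hM
  have hSch0 : Invertible (S - R * ⅟P * Q) := invertibleOfFromBlocks₁₁Invertible P Q R S
  have hPinv : ⅟P = P⁻¹ := invOf_eq_nonsing_inv P
  haveI hSchur : Invertible (S - R * P⁻¹ * Q) := hPinv ▸ hSch0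
  have hSg : IsUnit (S - R * P⁻¹ * Q).det := isUnit_det_of_invertible _
  -- adjugate = det • inverse
  have adjM := adj_eq_det_smul_inv (Matrix.fromBlocks P Q R S) hM
  have adjS2 := adj_eq_det_smul_inv (S - R * P⁻¹ * Q) hSg
  have hdet : (Matrix.fromBlocks P Q R S).det = P.det * (S - R * P⁻¹ * Q).det := by
    rw [det_fromBlocks₁₁, hPinv]
  have hinv22 : (Matrix.fromBlocks P Q R S)⁻¹ (Sum.inr k) (Sum.inr l) =
      (S - R * P⁻¹ * Q)⁻¹ k l := by
    rw [← invOf_eq_nonsing_inv, invOf_fromBlocks₁₁_eq, ← invOf_eq_nonsing_inv]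
    simp [fromBlocks_apply₂₂, hPinv]
  rw [adjM, adjS2, Matrix.smul_apply, Matrix.smul_apply, hinv22, hdet, smul_eq_mul,
    smul_eq_mul, mul_assoc]
end
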